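/- Let X₁ and X₂ be Banach spaces with measures of non-compactness η₁ on X₁* and η₂ on X₂*, and endow X₁* × X₂* (the dual of X₁ × X₂) with the supremum norm. Then the product function η₁ × η₂ is a measure of non-compactness on X₁* × X₂*, and: (1) for weak*-compact A¹ ⊆ X₁*, A² ⊆ X₂* and ε > 0, [η₁ × η₂]'_ε(A¹ × A²) ⊆ ([η₁]'_ε(A¹) × A²) ∪ (A¹ × [η₂]'_ε(A²)); (2) if [η₁]^ω_ε(A¹) = ∅ and [η₂]^ω_ε(A²) = ∅, then [η₁ × η₂]^ω_ε(A¹ × A²) = ∅. -/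

import Mathlib

open Filter Topology Set Pointwise

noncomputable section

namespace Szlenk

variable {E : Type*}

/-- The fragment derivation `[η]'_ε(A)` associated to a set function `η`:
the points of `A` all of whose neighborhoods `U` satisfy `η (A ∩ cl U) ≥ ε`. -/
def frag [TopologicalSpace E] (η : Set E → ℝ) (ε : ℝ) (A : Set E) : Set E :=
  {x | x ∈ A ∧ ∀ U ∈ 𝓝 x, ε ≤ η (A ∩ closure U)}

/-- Transfinite iterates `[η]^γ_ε(A)` of the fragment derivation. -/
def fragIter [TopologicalSpace E] (η : Set E → ℝ) (ε : ℝ) (A : Set E) (γ : Ordinal.{0}) :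
    Set E :=
  Ordinal.limitRecOn γ A (fun _ S => frag η ε S)
    (fun γ _ ih => ⋂ β : {β : Ordinal.{0} // β < γ}, ih β.1 β.2)

/-- The `ω`-iterated measure `η^ω (A) = inf {ε > 0 : [η]^ω_ε(A) = ∅}`. -/
def etaOmega [TopologicalSpace E] (η : Set E → ℝ) (A : Set E) : ℝ :=
  sInf {ε : ℝ | 0 < ε ∧ fragIter η ε A Ordinal.omega0 = ∅}

/-- The iterates `η^{ω^n}` (with `η^{ω^0} := η` and `η^{ω^{n+1}} := (η^{ω^n})^ω`). -/
def omegaPow [TopologicalSpace E] (η : Set E → ℝ) : ℕ → Set E → ℝ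
  | 0 => η
  | n + 1 => etaOmega (omegaPow η n)

/-- `η` is a measure of non compactness (with respect to the closed unit ball `ball`):
it is nonnegative, vanishes on singletons, is monotone, satisfies
`η (A ∪ B) = max (η A) (η B)`, and `η (A + l • ball) ≤ η A + l * b` for some `b > 0`.
All conditions are required on (weak*-)compact sets only. -/
structure IsMNCOn [TopologicalSpace E] [AddCommGroup E] [Module ℝ E]
    (ball : Set E) (η : Set E → ℝ) : Prop where
  nonneg : ∀ A : Set E, IsCompact A → 0 ≤ η A
  singleton : ∀ x : E, η {x} = 0
  mono : ∀ A B : Set E, IsCompact A → IsCompact B → A ⊆ B → η A ≤ η B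
  union : ∀ A B : Set E, IsCompact A → IsCompact B → η (A ∪ B) = max (η A) (η B)
  ball_add : ∃ b > 0, ∀ A : Set E, IsCompact A → ∀ l : ℝ, 0 < l →
    η (A + l • ball) ≤ η A + l * b

/-- `η` is a measure of non compactness with the explicit constant `b` in property (iii). -/
structure IsMNCWith [TopologicalSpace E] [AddCommGroup E] [Module ℝ E]
    (ball : Set E) (b : ℝ) (η : Set E → ℝ) : Prop where
  b_pos : 0 < b
  nonneg : ∀ A : Set E, IsCompact A → 0 ≤ η A
  singleton : ∀ x : E, η {x} = 0
  mono : ∀ A B : Set E, IsCompact A → IsCompact B → A ⊆ B → η A ≤ η B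
  union : ∀ A B : Set E, IsCompact A → IsCompact B → η (A ∪ B) = max (η A) (η B)
  ball_add : ∀ A : Set E, IsCompact A → ∀ l : ℝ, 0 < l →
    η (A + l • ball) ≤ η A + l * b

/-- A sublinear measure of non compactness: homogeneous and subadditive. -/
structure IsSublinear [TopologicalSpace E] [AddCommGroup E] [Module ℝ E]
    (η : Set E → ℝ) : Prop where
  homog : ∀ (l : ℝ) (A : Set E), IsCompact A → η (l • A) = |l| * η A
  subadd : ∀ A B : Set E, IsCompact A → IsCompact B → η (A + B) ≤ η A + η B

variable {X : Type*} [NormedAddCommGroup X] [NormedSpace ℝ X]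

/-- The dual norm on `X*` (the dual being equipped with its weak* topology). -/
def dnorm (f : WeakDual ℝ X) : ℝ := ‖WeakDual.toStrongDual f‖

/-- The closed unit ball of `X*`. -/
def dualBall (X : Type*) [NormedAddCommGroup X] [NormedSpace ℝ X] :
    Set (WeakDual ℝ X) := {f | dnorm f ≤ 1}

/-- The slice derivation `⟨η⟩'_ε(A)`: the points of `A` such that every weak*-closed
halfspace containing them meets `A` in a set of `η`-measure at least `ε`. -/
def sliceD (η : Set (WeakDual ℝ X) → ℝ) (ε : ℝ) (A : Set (WeakDual ℝ X)) :
    Set (WeakDual ℝ X) :=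
  {x | x ∈ A ∧ ∀ (f : X) (c : ℝ), c ≤ x f → ε ≤ η (A ∩ {y | c ≤ y f})}

/-- Transfinite iterates `⟨η⟩^γ_ε(A)` of the slice derivation. -/
def sliceIter (η : Set (WeakDual ℝ X) → ℝ) (ε : ℝ) (A : Set (WeakDual ℝ X))
    (γ : Ordinal.{0}) : Set (WeakDual ℝ X) :=
  Ordinal.limitRecOn γ A (fun _ S => sliceD η ε S)
    (fun γ _ ih => ⋂ β : {β : Ordinal.{0} // β < γ}, ih β.1 β.2)

/-- A weak*-closed halfspace of `X*`. -/
def IsHalfspace (H : Set (WeakDual ℝ X)) : Prop :=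
  ∃ (f : X) (c : ℝ), H = {y : WeakDual ℝ X | c ≤ y f}

/-- The Kuratowski measure of non compactness associated to a (dual) norm `Nd`:
the infimum of all `ε > 0` such that `A` can be covered by finitely many balls of
diameter `ε` (i.e. of radius `ε / 2`). -/
def kurN (Nd : WeakDual ℝ X → ℝ) (A : Set (WeakDual ℝ X)) : ℝ :=
  sInf {ε : ℝ | 0 < ε ∧
    ∃ F : Finset (WeakDual ℝ X), A ⊆ ⋃ c ∈ F, {y | Nd (y - c) ≤ ε / 2}}

/-- The Kuratowski measure of non compactness on `X*`. -/
def kur (A : Set (WeakDual ℝ X)) : ℝ := kurN dnorm A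

/-- The iterated sets `A^ε_β` of the convex Szlenk derivation:
`A^ε_{β+1}` is the weak*-closed convex hull of `[σ]'_ε(A^ε_β)`. -/
def convIter (ε : ℝ) (K : Set (WeakDual ℝ X)) (γ : Ordinal.{0}) : Set (WeakDual ℝ X) :=
  Ordinal.limitRecOn γ K (fun _ S => closure (convexHull ℝ (frag kur ε S)))
    (fun γ _ ih => ⋂ β : {β : Ordinal.{0} // β < γ}, ih β.1 β.2)

/-- The families `𝒯_α` of trees on `ℕ`. A tree is a set of finite sequences of
naturals (closed under initial segments); the root is the empty sequence, and
`(n)⌢s` is represented by `n :: s`. `𝒯_0 = {{∅}}`, and `T ∈ 𝒯_α` for `α ≥ 1` if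
`T = {∅} ∪ ⋃_k (n_k)⌢T_k` with `n_k` strictly increasing, `T_k ∈ 𝒯_{α_k}`, where
`α_k = β` for all `k` if `α = β + 1`, and `α_k ↗ α` if `α` is a limit ordinal. -/
inductive IsTreeFam : Ordinal.{0} → Set (List ℕ) → Prop
  | zero : IsTreeFam 0 {[]}
  | node {α : Ordinal.{0}} (nk : ℕ → ℕ) (αk : ℕ → Ordinal.{0}) (Tk : ℕ → Set (List ℕ))
      (hnk : StrictMono nk) (hTk : ∀ k, IsTreeFam (αk k) (Tk k))
      (hα : (∃ β, α = β + 1 ∧ ∀ k, αk k = β) ∨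
            (Order.IsSuccLimit α ∧ StrictMono αk ∧ α = ⨆ k, αk k)) :
      IsTreeFam α ({[]} ∪ ⋃ k, (List.cons (nk k)) '' Tk k)

/-- A family `(x_s)_{s ∈ T}` is weak*-continuous: `x_{s⌢n} → x_s` (in the ambient,
i.e. weak*, topology) along the children of every node `s` of `T`. -/
def IsContFam [TopologicalSpace E] (T : Set (List ℕ)) (x : List ℕ → E) : Prop :=
  ∀ s ∈ T, Tendsto (fun n : ℕ => x (s ++ [n]))
    (atTop ⊓ 𝓟 {n : ℕ | s ++ [n] ∈ T}) (𝓝 (x s))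

/-- A family `(x_s)_{s ∈ T}` in `X*` is `ε`-separated: `‖x_s - x_{s⌢n}‖ ≥ ε`. -/
def IsSepFam (ε : ℝ) (T : Set (List ℕ)) (x : List ℕ → WeakDual ℝ X) : Prop :=
  ∀ s ∈ T, ∀ n : ℕ, s ++ [n] ∈ T → ε ≤ dnorm (x s - x (s ++ [n]))

/-- Norm distance from a point of `X*` to a subset of `X*`. -/
def ddist (f : WeakDual ℝ X) (A : Set (WeakDual ℝ X)) : ℝ :=
  sInf ((fun g => dnorm (f - g)) '' A)

/-- The product `η₁ × η₂` of two measures of non compactness. -/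
def prodMNC {X₁ X₂ : Type*} [NormedAddCommGroup X₁] [NormedSpace ℝ X₁]
    [NormedAddCommGroup X₂] [NormedSpace ℝ X₂]
    (η₁ : Set (WeakDual ℝ X₁) → ℝ) (η₂ : Set (WeakDual ℝ X₂) → ℝ)
    (A : Set (WeakDual ℝ X₁ × WeakDual ℝ X₂)) : ℝ :=
  sInf {ε : ℝ | 0 < ε ∧ ∃ (n : ℕ) (A₁ : Fin n → Set (WeakDual ℝ X₁))
      (A₂ : Fin n → Set (WeakDual ℝ X₂)),
      (∀ i, IsCompact (A₁ i) ∧ IsCompact (A₂ i) ∧ η₁ (A₁ i) < ε ∧ η₂ (A₂ i) < ε) ∧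
      A ⊆ ⋃ i, A₁ i ×ˢ A₂ i}

/-- The dual norm on `X*` associated to an (equivalent) norm `N` on `X`. -/
def dualNormOf (N : X → ℝ) (f : WeakDual ℝ X) : ℝ :=
  sSup ((fun x => f x) '' {x : X | N x ≤ 1})

/-- The closed unit ball of the dual norm associated to a norm `N` on `X`. -/
def dualBallOf (N : X → ℝ) : Set (WeakDual ℝ X) :=
  {f : WeakDual ℝ X | ∀ x : X, |f x| ≤ N x}


/-!
Covering by finitely many products is stable under finite unions, monotone, and compatible
with `A + l • (B₁ × B₂) ⊆ (A₁ + l • B₁) × (A₂ + l • B₂)`, which makes `η₁ × η₂` a measure of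
non-compactness. If a point `(x₁, x₂)` has neighbourhoods `U₁`, `U₂` witnessing that
`x₁ ∉ [η₁]'_ε(A¹)` and `x₂ ∉ [η₂]'_ε(A²)`, then the single product
`(A¹ ∩ cl U₁) × (A² ∩ cl U₂)` covers `(A¹ × A²) ∩ cl (U₁ × U₂)`, giving (1). Since the fragment
derivation commutes with finite unions of compact sets, (1) iterates to
`[η₁ × η₂]^n_ε(A¹ × A²) ⊆ ⋃_{i + j = n} [η₁]^i_ε(A¹) × [η₂]^j_ε(A²)`; by Cantor's intersection
theorem the hypotheses of (2) mean `[η₁]^N_ε(A¹) = ∅` and `[η₂]^M_ε(A²) = ∅` for finite `N`,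
`M`, and then `[η₁ × η₂]^{N+M}_ε(A¹ × A²) = ∅`.
-/

section Fragment

variable {E : Type*} [TopologicalSpace E] {η : Set E → ℝ} {ε : ℝ}

lemma frag_subset (η : Set E → ℝ) (ε : ℝ) (A : Set E) : frag η ε A ⊆ A :=
  fun _ hx => hx.1

lemma frag_mono (hmono : ∀ A B : Set E, IsCompact A → IsCompact B → A ⊆ B → η A ≤ η B)
    {A B : Set E} (hA : IsCompact A) (hB : IsCompact B) (hAB : A ⊆ B) :
    frag η ε A ⊆ frag η ε B := fun _ hx =>
  ⟨hAB hx.1, fun U hU => (hx.2 U hU).trans <| hmono _ _ (hA.inter_right isClosed_closure)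
    (hB.inter_right isClosed_closure) (inter_subset_inter_left _ hAB)⟩

lemma isClosed_frag [T2Space E]
    (hmono : ∀ A B : Set E, IsCompact A → IsCompact B → A ⊆ B → η A ≤ η B)
    {A : Set E} (hA : IsCompact A) : IsClosed (frag η ε A) := by
  refine hA.isClosed.inter (isOpen_compl_iff.1 <| isOpen_iff_mem_nhds.2 fun x hx => ?_)
  obtain ⟨U, hU, hlt⟩ : ∃ U ∈ 𝓝 x, η (A ∩ closure U) < ε := by
    simpa only [not_forall, not_le, exists_prop] using
      (show ¬∀ U ∈ 𝓝 x, ε ≤ η (A ∩ closure U) from hx)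
  filter_upwards [interior_mem_nhds.2 hU] with y hy hy'
  exact (hy' _ (isOpen_interior.mem_nhds hy)).not_gt <| (hmono _ _
    (hA.inter_right isClosed_closure) (hA.inter_right isClosed_closure)
    (inter_subset_inter_right _ (closure_mono interior_subset))).trans_lt hlt

lemma exists_nhds_lt_of_notMem_frag [RegularSpace E] (hempty : η ∅ < ε) {B : Set E}
    (hB : IsClosed B) {x : E} (hx : x ∉ frag η ε B) : ∃ V ∈ 𝓝 x, η (B ∩ closure V) < ε := by
  by_cases hxB : x ∈ B
  · simpa [frag, hxB] using hx
  · obtain ⟨V, hV, hVc, hVB⟩ := exists_mem_nhds_isClosed_subset (hB.isOpen_compl.mem_nhds hxB)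
    refine ⟨V, hV, ?_⟩
    rwa [hVc.closure_eq, (subset_compl_iff_disjoint_left.1 hVB).inter_eq]

lemma frag_union_subset [T2Space E] [RegularSpace E]
    (hmono : ∀ A B : Set E, IsCompact A → IsCompact B → A ⊆ B → η A ≤ η B)
    (hunion : ∀ A B : Set E, IsCompact A → IsCompact B → η (A ∪ B) = max (η A) (η B))
    (hempty : η ∅ < ε) {B₁ B₂ : Set E} (hB₁ : IsCompact B₁) (hB₂ : IsCompact B₂) :
    frag η ε (B₁ ∪ B₂) ⊆ frag η ε B₁ ∪ frag η ε B₂ := by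
  intro x hx
  by_contra hx'
  obtain ⟨hx₁, hx₂⟩ := not_or.1 hx'
  obtain ⟨V₁, hV₁, hlt₁⟩ := exists_nhds_lt_of_notMem_frag hempty hB₁.isClosed hx₁
  obtain ⟨V₂, hV₂, hlt₂⟩ := exists_nhds_lt_of_notMem_frag hempty hB₂.isClosed hx₂
  have hK₁ : IsCompact (B₁ ∩ closure V₁) := hB₁.inter_right isClosed_closure
  have hK₂ : IsCompact (B₂ ∩ closure V₂) := hB₂.inter_right isClosed_closure
  have hsub : (B₁ ∪ B₂) ∩ closure (V₁ ∩ V₂) ⊆ (B₁ ∩ closure V₁) ∪ (B₂ ∩ closure V₂) := by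
    rintro y ⟨hy | hy, hyV⟩
    · exact Or.inl ⟨hy, closure_mono inter_subset_left hyV⟩
    · exact Or.inr ⟨hy, closure_mono inter_subset_right hyV⟩
  have hle := (hx.2 _ (inter_mem hV₁ hV₂)).trans <|
    hmono _ _ ((hB₁.union hB₂).inter_right isClosed_closure) (hK₁.union hK₂) hsub
  rw [hunion _ _ hK₁ hK₂] at hle
  exact hle.not_gt (max_lt hlt₁ hlt₂)

lemma frag_biUnion_subset [T2Space E] [RegularSpace E]
    (hmono : ∀ A B : Set E, IsCompact A → IsCompact B → A ⊆ B → η A ≤ η B)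
    (hunion : ∀ A B : Set E, IsCompact A → IsCompact B → η (A ∪ B) = max (η A) (η B))
    (hempty : η ∅ < ε) {ι : Type*} (s : Finset ι) (f : ι → Set E)
    (hf : ∀ i ∈ s, IsCompact (f i)) :
    frag η ε (⋃ i ∈ s, f i) ⊆ ⋃ i ∈ s, frag η ε (f i) := by
  classical
  induction s using Finset.induction with
  | empty => simpa using frag_subset η ε ∅
  | @insert a s _ ih =>
    have hfs : ∀ i ∈ s, IsCompact (f i) := fun i hi => hf i (Finset.mem_insert_of_mem hi)
    simp only [Finset.set_biUnion_insert]
    exact (frag_union_subset hmono hunion hempty (hf a (Finset.mem_insert_self a s))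
      (s.isCompact_biUnion hfs)).trans (union_subset_union_right _ (ih hfs))

lemma fragIter_zero (η : Set E → ℝ) (ε : ℝ) (A : Set E) : fragIter η ε A 0 = A :=
  Ordinal.limitRecOn_zero _ _ _

lemma fragIter_natCast_succ (η : Set E → ℝ) (ε : ℝ) (A : Set E) (n : ℕ) :
    fragIter η ε A ↑(n + 1) = frag η ε (fragIter η ε A n) := by
  rw [Nat.cast_succ, fragIter, Ordinal.limitRecOn_add_one]
  rfl

lemma fragIter_omega0 (η : Set E → ℝ) (ε : ℝ) (A : Set E) :
    fragIter η ε A Ordinal.omega0 = ⋂ n : ℕ, fragIter η ε A n := by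
  rw [fragIter, Ordinal.limitRecOn_limit _ _ _ _ Ordinal.isSuccLimit_omega0]
  ext x
  simp only [mem_iInter, Subtype.forall, Ordinal.lt_omega0]
  exact ⟨fun h n => h n ⟨n, rfl⟩, fun h _ ⟨n, hn⟩ => hn ▸ h n⟩

lemma fragIter_natCast_antitone (η : Set E → ℝ) (ε : ℝ) (A : Set E) :
    Antitone fun n : ℕ => fragIter η ε A n :=
  antitone_nat_of_succ_le fun n => by
    simpa only [fragIter_natCast_succ] using frag_subset η ε (fragIter η ε A n)

lemma isCompact_fragIter_natCast [T2Space E]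
    (hmono : ∀ A B : Set E, IsCompact A → IsCompact B → A ⊆ B → η A ≤ η B)
    {A : Set E} (hA : IsCompact A) : ∀ n : ℕ, IsCompact (fragIter η ε A n)
  | 0 => by rwa [Nat.cast_zero, fragIter_zero]
  | n + 1 => by
    have hn := isCompact_fragIter_natCast hmono hA n
    rw [fragIter_natCast_succ]
    exact hn.of_isClosed_subset (isClosed_frag hmono hn) (frag_subset _ _ _)

lemma fragIter_omega0_eq_empty_iff [T2Space E]
    (hmono : ∀ A B : Set E, IsCompact A → IsCompact B → A ⊆ B → η A ≤ η B)
    {A : Set E} (hA : IsCompact A) :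
    fragIter η ε A Ordinal.omega0 = ∅ ↔ ∃ n : ℕ, fragIter η ε A n = ∅ := by
  rw [fragIter_omega0]
  refine ⟨fun h => ?_, fun ⟨n, hn⟩ => subset_empty_iff.1 (hn ▸ iInter_subset _ n)⟩
  by_contra! hne
  have hcpt := isCompact_fragIter_natCast (ε := ε) hmono hA
  exact (IsCompact.nonempty_iInter_of_sequence_nonempty_isCompact_isClosed _
    (fun n => fragIter_natCast_antitone η ε A n.le_succ)
    hne (hcpt 0) fun n => (hcpt n).isClosed).ne_empty h

end Fragment

section ProdMNC

open Finset.HasAntidiagonal (antidiagonal)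

variable {X₁ X₂ : Type*} [NormedAddCommGroup X₁] [NormedSpace ℝ X₁]
  [NormedAddCommGroup X₂] [NormedSpace ℝ X₂]
  {η₁ : Set (WeakDual ℝ X₁) → ℝ} {η₂ : Set (WeakDual ℝ X₂) → ℝ}
  {A B : Set (WeakDual ℝ X₁ × WeakDual ℝ X₂)} {ε : ℝ}

/-- `prodMNC η₁ η₂ A` is, by definition, `sInf (prodCoverLevels η₁ η₂ A)`. -/
def prodCoverLevels (η₁ : Set (WeakDual ℝ X₁) → ℝ) (η₂ : Set (WeakDual ℝ X₂) → ℝ)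
    (A : Set (WeakDual ℝ X₁ × WeakDual ℝ X₂)) : Set ℝ :=
  {ε : ℝ | 0 < ε ∧ ∃ (n : ℕ) (A₁ : Fin n → Set (WeakDual ℝ X₁))
      (A₂ : Fin n → Set (WeakDual ℝ X₂)),
      (∀ i, IsCompact (A₁ i) ∧ IsCompact (A₂ i) ∧ η₁ (A₁ i) < ε ∧ η₂ (A₂ i) < ε) ∧
      A ⊆ ⋃ i, A₁ i ×ˢ A₂ i}

lemma prodMNC_le_of_mem (h : ε ∈ prodCoverLevels η₁ η₂ A) : prodMNC η₁ η₂ A ≤ ε :=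
  csInf_le ⟨0, fun _ hδ => hδ.1.le⟩ h

lemma prodMNC_nonneg (η₁ : Set (WeakDual ℝ X₁) → ℝ) (η₂ : Set (WeakDual ℝ X₂) → ℝ)
    (A : Set (WeakDual ℝ X₁ × WeakDual ℝ X₂)) : 0 ≤ prodMNC η₁ η₂ A :=
  Real.sInf_nonneg fun _ hδ => hδ.1.le

lemma mem_prodCoverLevels_of_subset_prod {K₁ : Set (WeakDual ℝ X₁)} {K₂ : Set (WeakDual ℝ X₂)}
    (hε : 0 < ε) (hK₁ : IsCompact K₁) (hK₂ : IsCompact K₂) (h₁ : η₁ K₁ < ε) (h₂ : η₂ K₂ < ε)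
    (hA : A ⊆ K₁ ×ˢ K₂) : ε ∈ prodCoverLevels η₁ η₂ A :=
  ⟨hε, 1, fun _ => K₁, fun _ => K₂, fun _ => ⟨hK₁, hK₂, h₁, h₂⟩,
    hA.trans (subset_iUnion (fun _ : Fin 1 => K₁ ×ˢ K₂) 0)⟩

lemma prodCoverLevels_nonempty (hA : IsCompact A) : (prodCoverLevels η₁ η₂ A).Nonempty := by
  set K₁ := Prod.fst '' A
  set K₂ := Prod.snd '' A
  refine ⟨|η₁ K₁| + |η₂ K₂| + 1, mem_prodCoverLevels_of_subset_prod (by positivity)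
    (hA.image continuous_fst) (hA.image continuous_snd) ?_ ?_
    fun x hx => ⟨mem_image_of_mem _ hx, mem_image_of_mem _ hx⟩⟩ <;>
  linarith [le_abs_self (η₁ K₁), le_abs_self (η₂ K₂), abs_nonneg (η₁ K₁), abs_nonneg (η₂ K₂)]

lemma mem_prodCoverLevels_of_lt (hA : IsCompact A) (h : prodMNC η₁ η₂ A < ε) :
    ε ∈ prodCoverLevels η₁ η₂ A := by
  obtain ⟨δ, ⟨hδ, n, A₁, A₂, hA₁₂, hcov⟩, hδε⟩ :=
    exists_lt_of_csInf_lt (prodCoverLevels_nonempty hA) h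
  exact ⟨hδ.trans hδε, n, A₁, A₂, fun i => ⟨(hA₁₂ i).1, (hA₁₂ i).2.1,
    (hA₁₂ i).2.2.1.trans hδε, (hA₁₂ i).2.2.2.trans hδε⟩, hcov⟩

lemma prodMNC_lt_of_subset_prod {K₁ : Set (WeakDual ℝ X₁)} {K₂ : Set (WeakDual ℝ X₂)}
    (hε : 0 < ε) (hK₁ : IsCompact K₁) (hK₂ : IsCompact K₂) (h₁ : η₁ K₁ < ε) (h₂ : η₂ K₂ < ε)
    (hA : A ⊆ K₁ ×ˢ K₂) : prodMNC η₁ η₂ A < ε := by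
  obtain ⟨δ, hδ, hδε⟩ := exists_between (max_lt (max_lt h₁ h₂) hε)
  rw [max_lt_iff, max_lt_iff] at hδ
  exact (prodMNC_le_of_mem <| mem_prodCoverLevels_of_subset_prod hδ.2 hK₁ hK₂ hδ.1.1 hδ.1.2 hA
    ).trans_lt hδε

lemma prodMNC_mono (hB : IsCompact B) (hAB : A ⊆ B) : prodMNC η₁ η₂ A ≤ prodMNC η₁ η₂ B :=
  csInf_le_csInf ⟨0, fun _ hδ => hδ.1.le⟩ (prodCoverLevels_nonempty hB)
    fun _ ⟨hδ, n, A₁, A₂, hA₁₂, hcov⟩ => ⟨hδ, n, A₁, A₂, hA₁₂, hAB.trans hcov⟩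

lemma union_mem_prodCoverLevels (hA : ε ∈ prodCoverLevels η₁ η₂ A)
    (hB : ε ∈ prodCoverLevels η₁ η₂ B) : ε ∈ prodCoverLevels η₁ η₂ (A ∪ B) := by
  obtain ⟨hε, n, A₁, A₂, hA₁₂, hcovA⟩ := hA
  obtain ⟨-, m, B₁, B₂, hB₁₂, hcovB⟩ := hB
  refine ⟨hε, n + m, Fin.append A₁ B₁, Fin.append A₂ B₂,
    Fin.addCases (by simpa using hA₁₂) (by simpa using hB₁₂), union_subset ?_ ?_⟩
  · refine hcovA.trans (iUnion_subset fun i => ?_)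
    simpa using subset_iUnion (fun j => Fin.append A₁ B₁ j ×ˢ Fin.append A₂ B₂ j)
      (Fin.castAdd m i)
  · refine hcovB.trans (iUnion_subset fun i => ?_)
    simpa using subset_iUnion (fun j => Fin.append A₁ B₁ j ×ˢ Fin.append A₂ B₂ j)
      (Fin.natAdd n i)

lemma prodMNC_union (hA : IsCompact A) (hB : IsCompact B) :
    prodMNC η₁ η₂ (A ∪ B) = max (prodMNC η₁ η₂ A) (prodMNC η₁ η₂ B) := by
  refine le_antisymm (le_of_forall_gt_imp_ge_of_dense fun δ hδ => ?_)
    (max_le (prodMNC_mono (hA.union hB) subset_union_left)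
      (prodMNC_mono (hA.union hB) subset_union_right))
  rw [max_lt_iff] at hδ
  exact prodMNC_le_of_mem <| union_mem_prodCoverLevels (mem_prodCoverLevels_of_lt hA hδ.1)
    (mem_prodCoverLevels_of_lt hB hδ.2)

lemma prodMNC_singleton {x : WeakDual ℝ X₁ × WeakDual ℝ X₂} (h₁ : η₁ {x.1} = 0)
    (h₂ : η₂ {x.2} = 0) : prodMNC η₁ η₂ {x} = 0 :=
  le_antisymm (le_of_forall_pos_lt_add fun _ hδ => by
    simpa using prodMNC_lt_of_subset_prod hδ isCompact_singleton isCompact_singleton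
      (h₁ ▸ hδ) (h₂ ▸ hδ) (singleton_subset_iff.2 ⟨rfl, rfl⟩)) (prodMNC_nonneg η₁ η₂ _)

lemma prodMNC_empty_lt (hε : 0 < ε) : prodMNC η₁ η₂ ∅ < ε :=
  (prodMNC_le_of_mem ⟨half_pos hε, 0, Fin.elim0, Fin.elim0, fun i => i.elim0,
    empty_subset _⟩).trans_lt (half_lt_self hε)

lemma add_smul_mem_prodCoverLevels {B₁ : Set (WeakDual ℝ X₁)} {B₂ : Set (WeakDual ℝ X₂)}
    (hB₁ : IsCompact B₁) (hB₂ : IsCompact B₂) {b l : ℝ} (hb : 0 ≤ b) (hl : 0 < l)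
    (hb₁ : ∀ K, IsCompact K → η₁ (K + l • B₁) ≤ η₁ K + l * b)
    (hb₂ : ∀ K, IsCompact K → η₂ (K + l • B₂) ≤ η₂ K + l * b)
    (hA : ε ∈ prodCoverLevels η₁ η₂ A) :
    ε + l * b ∈ prodCoverLevels η₁ η₂ (A + l • (B₁ ×ˢ B₂)) := by
  obtain ⟨hε, n, A₁, A₂, hA₁₂, hcov⟩ := hA
  refine ⟨by positivity, n, fun i => A₁ i + l • B₁, fun i => A₂ i + l • B₂,
    fun i => ⟨(hA₁₂ i).1.add (hB₁.smul l), (hA₁₂ i).2.1.add (hB₂.smul l), ?_, ?_⟩, ?_⟩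
  · linarith [hb₁ _ (hA₁₂ i).1, (hA₁₂ i).2.2.1]
  · linarith [hb₂ _ (hA₁₂ i).2.1, (hA₁₂ i).2.2.2]
  · calc A + l • (B₁ ×ˢ B₂) ⊆ (⋃ i, A₁ i ×ˢ A₂ i) + l • (B₁ ×ˢ B₂) := add_subset_add_right hcov
      _ = ⋃ i, (A₁ i + l • B₁) ×ˢ (A₂ i + l • B₂) := by
        simp only [iUnion_add, smul_set_prod, prod_add_prod_comm]

lemma prodMNC_add_smul_le {B₁ : Set (WeakDual ℝ X₁)} {B₂ : Set (WeakDual ℝ X₂)}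
    (hB₁ : IsCompact B₁) (hB₂ : IsCompact B₂) {b l : ℝ} (hb : 0 ≤ b) (hl : 0 < l)
    (hb₁ : ∀ K, IsCompact K → η₁ (K + l • B₁) ≤ η₁ K + l * b)
    (hb₂ : ∀ K, IsCompact K → η₂ (K + l • B₂) ≤ η₂ K + l * b) (hA : IsCompact A) :
    prodMNC η₁ η₂ (A + l • (B₁ ×ˢ B₂)) ≤ prodMNC η₁ η₂ A + l * b := by
  rw [← sub_le_iff_le_add]
  exact le_csInf (prodCoverLevels_nonempty hA) fun δ hδ => sub_le_iff_le_add.2 <|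
    prodMNC_le_of_mem (add_smul_mem_prodCoverLevels hB₁ hB₂ hb hl hb₁ hb₂ hδ)

theorem isMNCOn_prodMNC {B₁ : Set (WeakDual ℝ X₁)} {B₂ : Set (WeakDual ℝ X₂)}
    (h₁ : IsMNCOn B₁ η₁) (h₂ : IsMNCOn B₂ η₂) (hB₁ : IsCompact B₁) (hB₂ : IsCompact B₂) :
    IsMNCOn (B₁ ×ˢ B₂) (prodMNC η₁ η₂) := by
  obtain ⟨b₁, hb₁, hball₁⟩ := h₁.ball_add
  obtain ⟨b₂, hb₂, hball₂⟩ := h₂.ball_add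
  refine ⟨fun A _ => prodMNC_nonneg η₁ η₂ A,
    fun x => prodMNC_singleton (h₁.singleton x.1) (h₂.singleton x.2),
    fun _ _ _ hB hAB => prodMNC_mono hB hAB, fun _ _ hA hB => prodMNC_union hA hB,
    max b₁ b₂, lt_max_of_lt_left hb₁, fun A hA l hl =>
      prodMNC_add_smul_le hB₁ hB₂ (le_max_of_le_left hb₁.le) hl (fun K hK => ?_)
        (fun K hK => ?_) hA⟩
  · exact (hball₁ K hK l hl).trans (by gcongr; exact le_max_left _ _)
  · exact (hball₂ K hK l hl).trans (by gcongr; exact le_max_right _ _)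

theorem frag_prodMNC_prod_subset {A₁ : Set (WeakDual ℝ X₁)} {A₂ : Set (WeakDual ℝ X₂)}
    (hA₁ : IsCompact A₁) (hA₂ : IsCompact A₂) (hε : 0 < ε) :
    frag (prodMNC η₁ η₂) ε (A₁ ×ˢ A₂) ⊆ (frag η₁ ε A₁ ×ˢ A₂) ∪ (A₁ ×ˢ frag η₂ ε A₂) := by
  rintro x ⟨⟨hx₁, hx₂⟩, hx⟩
  by_contra h
  simp only [mem_union, mem_prod, hx₁, hx₂, and_true, true_and, not_or] at h
  obtain ⟨U₁, hU₁, hlt₁⟩ : ∃ U ∈ 𝓝 x.1, η₁ (A₁ ∩ closure U) < ε := by simpa [frag, hx₁] using h.1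
  obtain ⟨U₂, hU₂, hlt₂⟩ : ∃ U ∈ 𝓝 x.2, η₂ (A₂ ∩ closure U) < ε := by simpa [frag, hx₂] using h.2
  refine (hx _ (prod_mem_nhds hU₁ hU₂)).not_gt <| prodMNC_lt_of_subset_prod hε
    (hA₁.inter_right isClosed_closure) (hA₂.inter_right isClosed_closure) hlt₁ hlt₂ ?_
  rw [closure_prod_eq, prod_inter_prod]

theorem fragIter_prodMNC_prod_subset {A₁ : Set (WeakDual ℝ X₁)} {A₂ : Set (WeakDual ℝ X₂)}
    (hmono₁ : ∀ A B, IsCompact A → IsCompact B → A ⊆ B → η₁ A ≤ η₁ B)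
    (hmono₂ : ∀ A B, IsCompact A → IsCompact B → A ⊆ B → η₂ A ≤ η₂ B)
    (hA₁ : IsCompact A₁) (hA₂ : IsCompact A₂) (hε : 0 < ε) (n : ℕ) :
    fragIter (prodMNC η₁ η₂) ε (A₁ ×ˢ A₂) n ⊆
      ⋃ p ∈ antidiagonal n, fragIter η₁ ε A₁ p.1 ×ˢ fragIter η₂ ε A₂ p.2 := by
  induction n with
  | zero => simp [fragIter_zero]
  | succ n ih =>
    have hK : ∀ p ∈ antidiagonal n,
        IsCompact (fragIter η₁ ε A₁ p.1 ×ˢ fragIter η₂ ε A₂ p.2) := fun p _ =>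
      (isCompact_fragIter_natCast hmono₁ hA₁ _).prod (isCompact_fragIter_natCast hmono₂ hA₂ _)
    have hmono : ∀ A B : Set (WeakDual ℝ X₁ × WeakDual ℝ X₂), IsCompact A → IsCompact B →
        A ⊆ B → prodMNC η₁ η₂ A ≤ prodMNC η₁ η₂ B := fun _ _ _ hB hAB => prodMNC_mono hB hAB
    rw [fragIter_natCast_succ]
    refine (frag_mono hmono (isCompact_fragIter_natCast hmono (hA₁.prod hA₂) n)
      (Finset.isCompact_biUnion _ hK) ih).trans <|
      (frag_biUnion_subset hmono (fun _ _ => prodMNC_union) (prodMNC_empty_lt hε) _ _ hK).trans <|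
      iUnion₂_subset fun p hp => ?_
    rw [Finset.HasAntidiagonal.mem_antidiagonal] at hp
    refine (frag_prodMNC_prod_subset (isCompact_fragIter_natCast hmono₁ hA₁ _)
      (isCompact_fragIter_natCast hmono₂ hA₂ _) hε).trans (union_subset ?_ ?_)
    · refine subset_iUnion₂_of_subset (p.1 + 1, p.2)
        (Finset.HasAntidiagonal.mem_antidiagonal.2 (by omega)) ?_
      rw [fragIter_natCast_succ]
    · refine subset_iUnion₂_of_subset (p.1, p.2 + 1)
        (Finset.HasAntidiagonal.mem_antidiagonal.2 (by omega)) ?_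
      rw [fragIter_natCast_succ]

theorem fragIter_prodMNC_prod_omega0_eq_empty {A₁ : Set (WeakDual ℝ X₁)}
    {A₂ : Set (WeakDual ℝ X₂)}
    (hmono₁ : ∀ A B, IsCompact A → IsCompact B → A ⊆ B → η₁ A ≤ η₁ B)
    (hmono₂ : ∀ A B, IsCompact A → IsCompact B → A ⊆ B → η₂ A ≤ η₂ B)
    (hA₁ : IsCompact A₁) (hA₂ : IsCompact A₂) (hε : 0 < ε)
    (h₁ : fragIter η₁ ε A₁ Ordinal.omega0 = ∅) (h₂ : fragIter η₂ ε A₂ Ordinal.omega0 = ∅) :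
    fragIter (prodMNC η₁ η₂) ε (A₁ ×ˢ A₂) Ordinal.omega0 = ∅ := by
  obtain ⟨N, hN⟩ := (fragIter_omega0_eq_empty_iff hmono₁ hA₁).1 h₁
  obtain ⟨M, hM⟩ := (fragIter_omega0_eq_empty_iff hmono₂ hA₂).1 h₂
  refine (fragIter_omega0_eq_empty_iff (fun _ _ _ hB hAB => prodMNC_mono hB hAB)
    (hA₁.prod hA₂)).2 ⟨N + M, subset_empty_iff.1 <|
      (fragIter_prodMNC_prod_subset hmono₁ hmono₂ hA₁ hA₂ hε _).trans <|
      iUnion₂_subset fun p hp => ?_⟩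
  rw [Finset.HasAntidiagonal.mem_antidiagonal] at hp
  rcases le_or_gt N p.1 with hNp | hpN
  · have h : fragIter η₁ ε A₁ p.1 ⊆ fragIter η₁ ε A₁ N := fragIter_natCast_antitone η₁ ε A₁ hNp
    rw [hN, subset_empty_iff] at h
    rw [h, empty_prod]
  · have h : fragIter η₂ ε A₂ p.2 ⊆ fragIter η₂ ε A₂ M :=
      fragIter_natCast_antitone η₂ ε A₂ (by omega)
    rw [hM, subset_empty_iff] at h
    rw [h, prod_empty]

end ProdMNC

lemma isCompact_dualBall (X : Type*) [NormedAddCommGroup X] [NormedSpace ℝ X] :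
    IsCompact (dualBall X) := by
  simpa [dualBall, dnorm, Metric.closedBall, dist_zero_right] using
    WeakDual.isCompact_closedBall (𝕜 := ℝ) (E := X) 0 1

theorem prodMNC_isMNC_general
    {X₁ X₂ : Type*} [NormedAddCommGroup X₁] [NormedSpace ℝ X₁]
    [NormedAddCommGroup X₂] [NormedSpace ℝ X₂]
    (η₁ : Set (WeakDual ℝ X₁) → ℝ) (η₂ : Set (WeakDual ℝ X₂) → ℝ)
    (h₁ : IsMNCOn (dualBall X₁) η₁) (h₂ : IsMNCOn (dualBall X₂) η₂) :
    IsMNCOn (dualBall X₁ ×ˢ dualBall X₂) (prodMNC η₁ η₂) ∧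
    (∀ (A₁ : Set (WeakDual ℝ X₁)) (A₂ : Set (WeakDual ℝ X₂)),
      IsCompact A₁ → IsCompact A₂ → ∀ ε : ℝ, 0 < ε →
      frag (prodMNC η₁ η₂) ε (A₁ ×ˢ A₂) ⊆
        (frag η₁ ε A₁ ×ˢ A₂) ∪ (A₁ ×ˢ frag η₂ ε A₂)) ∧
    (∀ (A₁ : Set (WeakDual ℝ X₁)) (A₂ : Set (WeakDual ℝ X₂)),
      IsCompact A₁ → IsCompact A₂ → ∀ ε : ℝ, 0 < ε →
      fragIter η₁ ε A₁ Ordinal.omega0 = ∅ → fragIter η₂ ε A₂ Ordinal.omega0 = ∅ →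
      fragIter (prodMNC η₁ η₂) ε (A₁ ×ˢ A₂) Ordinal.omega0 = ∅) :=
  ⟨isMNCOn_prodMNC h₁ h₂ (isCompact_dualBall X₁) (isCompact_dualBall X₂),
    fun _ _ hA₁ hA₂ _ hε => frag_prodMNC_prod_subset hA₁ hA₂ hε,
    fun _ _ hA₁ hA₂ _ hε => fragIter_prodMNC_prod_omega0_eq_empty h₁.mono h₂.mono hA₁ hA₂ hε⟩

/-- The product `η₁ × η₂` of two measures of non compactness is a measure of non
compactness on `X₁* × X₂*` (endowed with the supremum norm, whose unit ball is
`dualBall X₁ ×ˢ dualBall X₂`), and moreover: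
(1) `[η₁ × η₂]'_ε(A¹ × A²) ⊆ ([η₁]'_ε(A¹) × A²) ∪ (A¹ × [η₂]'_ε(A²))`;
(2) if `[η₁]^ω_ε(A¹) = ∅` and `[η₂]^ω_ε(A²) = ∅` then `[η₁ × η₂]^ω_ε(A¹ × A²) = ∅`. -/
theorem prodMNC_isMNC
    {X₁ X₂ : Type*} [NormedAddCommGroup X₁] [NormedSpace ℝ X₁] [CompleteSpace X₁]
    [NormedAddCommGroup X₂] [NormedSpace ℝ X₂] [CompleteSpace X₂]
    (η₁ : Set (WeakDual ℝ X₁) → ℝ) (η₂ : Set (WeakDual ℝ X₂) → ℝ)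
    (h₁ : IsMNCOn (dualBall X₁) η₁) (h₂ : IsMNCOn (dualBall X₂) η₂) :
    IsMNCOn (dualBall X₁ ×ˢ dualBall X₂) (prodMNC η₁ η₂) ∧
    (∀ (A₁ : Set (WeakDual ℝ X₁)) (A₂ : Set (WeakDual ℝ X₂)),
      IsCompact A₁ → IsCompact A₂ → ∀ ε : ℝ, 0 < ε →
      frag (prodMNC η₁ η₂) ε (A₁ ×ˢ A₂) ⊆
        (frag η₁ ε A₁ ×ˢ A₂) ∪ (A₁ ×ˢ frag η₂ ε A₂)) ∧
    (∀ (A₁ : Set (WeakDual ℝ X₁)) (A₂ : Set (WeakDual ℝ X₂)),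
      IsCompact A₁ → IsCompact A₂ → ∀ ε : ℝ, 0 < ε →
      fragIter η₁ ε A₁ Ordinal.omega0 = ∅ → fragIter η₂ ε A₂ Ordinal.omega0 = ∅ →
      fragIter (prodMNC η₁ η₂) ε (A₁ ×ˢ A₂) Ordinal.omega0 = ∅) :=
  prodMNC_isMNC_general η₁ η₂ h₁ h₂

end Szlenk
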